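/- In the preconditioned linear Anderson mixing setup with a fixed nonsingular preconditioner M ∈ ℝ^{d×d}, let k ≥ 1 and suppose rank(R_k) = k. Then the projected iterate coincides with the right-preconditioned GMRES iterate: x̄_k = x_k^{RG}, i.e., x̄_k is the unique minimizer of x ↦ ‖b − Ax‖₂ over the affine subspace x₀ + 𝒦_k(M⁻¹A, M⁻¹r(x₀)). -/

import Mathlib

open Matrix

/-- The Euclidean (ℓ₂) norm of a vector in `ℝ^n`. -/
noncomputable def norm2 {n : ℕ} (v : Fin n → ℝ) : ℝ := Real.sqrt (∑ i, v i ^ 2)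

/-- The residual `r(x) = b − Ax`. -/
def resid {d : ℕ} (A : Matrix (Fin d) (Fin d) ℝ) (b : Fin d → ℝ) (x : Fin d → ℝ) :
    Fin d → ℝ := b - A.mulVec x

/-- The matrix whose columns are the first `j` forward differences of the sequence `v`. -/
def diffMat {d : ℕ} (v : ℕ → Fin d → ℝ) (j : ℕ) : Matrix (Fin d) (Fin j) ℝ :=
  Matrix.of fun i (l : Fin j) => v ((l : ℕ) + 1) i - v (l : ℕ) i

/-- The `k`-th Krylov subspace `𝒦_k(B, v) = span{v, Bv, …, B^{k−1}v}`. -/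
def krylov {d : ℕ} (B : Matrix (Fin d) (Fin d) ℝ) (v : Fin d → ℝ) (k : ℕ) :
    Submodule ℝ (Fin d → ℝ) :=
  Submodule.span ℝ {w | ∃ i < k, w = (B ^ i).mulVec v}

/-! With `B = M⁻¹A`, each Anderson step is `x_{l+1} − x_l = M⁻¹r₀ − B (x̄_l − x₀) − X_l Γ_l`, so by
induction `x_{l+1} − x_l ∈ 𝒦_{l+1}(B, M⁻¹r₀)` and the columns of `X_k` lie in `𝒦_k`. As
`R_k = −A X_k` has rank `k` and `dim 𝒦_k ≤ k`, they span it, so `x₀ + 𝒦_k = {x_k − X_k Γ}`. On this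
set `r(x_k − X_k Γ) = r_k − R_k Γ`, hence the least-squares problem defining `Γ_k` is the GMRES
problem. Uniqueness comes from the strict convexity of the Euclidean norm and the injectivity
of `A`. -/

lemma norm2_eq_norm_toLp {n : ℕ} (v : Fin n → ℝ) :
    norm2 v = ‖(WithLp.toLp 2 v : EuclideanSpace ℝ (Fin n))‖ := by
  simp [norm2, EuclideanSpace.norm_eq]

section Krylov

variable {d : ℕ} (B : Matrix (Fin d) (Fin d) ℝ) (v : Fin d → ℝ)

lemma krylov_mono : Monotone (krylov B v) :=
  fun _ _ h => Submodule.span_mono fun _ ⟨i, hi, hw⟩ => ⟨i, hi.trans_le h, hw⟩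

lemma self_mem_krylov_succ (j : ℕ) : v ∈ krylov B v (j + 1) :=
  Submodule.subset_span ⟨0, j.succ_pos, by simp⟩

variable {B v} in
lemma mulVec_mem_krylov_succ {j : ℕ} {w : Fin d → ℝ} (hw : w ∈ krylov B v j) :
    B *ᵥ w ∈ krylov B v (j + 1) := by
  induction hw using Submodule.span_induction with
  | mem w hw =>
    obtain ⟨i, hi, rfl⟩ := hw
    exact Submodule.subset_span ⟨i + 1, by omega, by rw [mulVec_mulVec, ← pow_succ']⟩
  | zero => simp
  | add u w _ _ hu hw => rw [mulVec_add]; exact add_mem hu hw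
  | smul a u _ hu => rw [mulVec_smul]; exact Submodule.smul_mem _ _ hu

lemma krylov_eq_span_range (k : ℕ) :
    krylov B v k = Submodule.span ℝ (Set.range fun i : Fin k => (B ^ (i : ℕ)) *ᵥ v) := by
  refine congrArg _ (Set.ext fun w => ?_)
  exact ⟨fun ⟨i, hi, hw⟩ => ⟨⟨i, hi⟩, hw.symm⟩, fun ⟨i, hw⟩ => ⟨i, i.isLt, hw.symm⟩⟩

lemma finrank_krylov_le (k : ℕ) : Module.finrank ℝ (krylov B v k) ≤ k := by
  rw [krylov_eq_span_range]
  exact (finrank_range_le_card _).trans_eq (Fintype.card_fin k)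

end Krylov

section DiffMat

variable {d : ℕ}

lemma range_diffMat_le {v : ℕ → Fin d → ℝ} {j : ℕ} {p : Submodule ℝ (Fin d → ℝ)}
    (h : ∀ l < j, v (l + 1) - v l ∈ p) : LinearMap.range (diffMat v j).mulVecLin ≤ p := by
  rw [range_mulVecLin, Submodule.span_le]
  rintro _ ⟨l, rfl⟩
  exact h l l.isLt

lemma diffMat_mulVec_mem {v : ℕ → Fin d → ℝ} {j : ℕ} {p : Submodule ℝ (Fin d → ℝ)}
    (h : ∀ l < j, v (l + 1) - v l ∈ p) (G : Fin j → ℝ) : diffMat v j *ᵥ G ∈ p :=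
  range_diffMat_le h ⟨G, rfl⟩

lemma sub_mem_of_forall_succ_sub_mem {v : ℕ → Fin d → ℝ} {j : ℕ} {p : Submodule ℝ (Fin d → ℝ)}
    (h : ∀ l < j, v (l + 1) - v l ∈ p) : v j - v 0 ∈ p := by
  rw [← Finset.sum_range_sub]
  exact Submodule.sum_mem _ fun l hl => h l (Finset.mem_range.mp hl)

end DiffMat

section Residual

variable {d : ℕ} (A : Matrix (Fin d) (Fin d) ℝ) (b : Fin d → ℝ)

lemma resid_eq_resid_sub_mulVec (y x₀ : Fin d → ℝ) :
    resid A b y = resid A b x₀ - A *ᵥ (y - x₀) := by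
  simp only [resid, mulVec_sub]
  abel

lemma resid_midpoint (y z : Fin d → ℝ) :
    resid A b ((1 / 2 : ℝ) • (y + z)) = (1 / 2 : ℝ) • (resid A b y + resid A b z) := by
  simp only [resid, mulVec_smul, mulVec_add, smul_add, smul_sub]
  module

lemma diffMat_resid (v : ℕ → Fin d → ℝ) (j : ℕ) :
    diffMat (fun i => resid A b (v i)) j = -(A * diffMat v j) := by
  ext i l
  simp only [diffMat, resid, of_apply, Matrix.neg_apply, mul_apply, Pi.sub_apply, mulVec,
    dotProduct, mul_sub, Finset.sum_sub_distrib]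
  ring

lemma resid_sub_diffMat_mulVec (v : ℕ → Fin d → ℝ) (j : ℕ) (G : Fin j → ℝ) :
    resid A b (v j - diffMat v j *ᵥ G)
      = resid A b (v j) - diffMat (fun i => resid A b (v i)) j *ᵥ G := by
  rw [diffMat_resid, neg_mulVec, ← mulVec_mulVec]
  simp only [resid, mulVec_sub]
  abel

end Residual

section Anderson

variable {d : ℕ} {A P : Matrix (Fin d) (Fin d) ℝ} {b : Fin d → ℝ} {x : ℕ → Fin d → ℝ}
  {Γ : (j : ℕ) → Fin j → ℝ}

theorem anderson_sub_mem_krylov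
    (hx1 : x 1 = x 0 + P *ᵥ resid A b (x 0))
    (hrec : ∀ j : ℕ, 1 ≤ j →
      x (j + 1) = x j + P *ᵥ resid A b (x j)
        - (diffMat x j + P * diffMat (fun i => resid A b (x i)) j) *ᵥ Γ j)
    (l : ℕ) : x (l + 1) - x l ∈ krylov (P * A) (P *ᵥ resid A b (x 0)) (l + 1) := by
  set B := P * A
  set v₀ := P *ᵥ resid A b (x 0)
  induction l using Nat.strong_induction_on with
  | _ l ih =>
    rcases Nat.eq_zero_or_pos l with rfl | hl
    · rw [hx1, add_sub_cancel_left]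
      exact self_mem_krylov_succ B v₀ 0
    have hcols : ∀ i < l, x (i + 1) - x i ∈ krylov B v₀ l :=
      fun i hi => krylov_mono B v₀ hi (ih i hi)
    have hX : diffMat x l *ᵥ Γ l ∈ krylov B v₀ l := diffMat_mulVec_mem hcols (Γ l)
    have hproj : x l - x 0 - diffMat x l *ᵥ Γ l ∈ krylov B v₀ l :=
      sub_mem (sub_mem_of_forall_succ_sub_mem hcols) hX
    have hstep : x (l + 1) - x l
        = v₀ - B *ᵥ (x l - x 0 - diffMat x l *ᵥ Γ l) - diffMat x l *ᵥ Γ l := by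
      rw [hrec l hl, resid_eq_resid_sub_mulVec A b (x l) (x 0), diffMat_resid, add_mulVec,
        Matrix.mul_neg, neg_mulVec]
      simp only [B, v₀, mulVec_sub, ← mulVec_mulVec]
      abel
    rw [hstep]
    exact sub_mem (sub_mem (self_mem_krylov_succ B v₀ l) (mulVec_mem_krylov_succ hproj))
      (krylov_mono B v₀ l.le_succ hX)

theorem range_diffMat_eq_krylov (hA : IsUnit A.det)
    (hx1 : x 1 = x 0 + P *ᵥ resid A b (x 0))
    (hrec : ∀ j : ℕ, 1 ≤ j →
      x (j + 1) = x j + P *ᵥ resid A b (x j)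
        - (diffMat x j + P * diffMat (fun i => resid A b (x i)) j) *ᵥ Γ j)
    {k : ℕ} (hrank : (diffMat (fun i => resid A b (x i)) k).rank = k) :
    LinearMap.range (diffMat x k).mulVecLin = krylov (P * A) (P *ᵥ resid A b (x 0)) k := by
  have hle :
      LinearMap.range (diffMat x k).mulVecLin ≤ krylov (P * A) (P *ᵥ resid A b (x 0)) k :=
    range_diffMat_le fun l hl => krylov_mono _ _ hl (anderson_sub_mem_krylov hx1 hrec l)
  have hXrank : (diffMat x k).rank = k := by
    have hnegA : IsUnit (-A).det := by rw [det_neg]; exact (isUnit_one.neg.pow _).mul hA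
    rwa [diffMat_resid, ← Matrix.neg_mul, rank_mul_eq_right_of_isUnit_det _ _ hnegA] at hrank
  exact Submodule.eq_of_le_of_finrank_le hle ((finrank_krylov_le _ _ k).trans hXrank.ge)

theorem sub_mem_krylov_iff (hA : IsUnit A.det)
    (hx1 : x 1 = x 0 + P *ᵥ resid A b (x 0))
    (hrec : ∀ j : ℕ, 1 ≤ j →
      x (j + 1) = x j + P *ᵥ resid A b (x j)
        - (diffMat x j + P * diffMat (fun i => resid A b (x i)) j) *ᵥ Γ j)
    {k : ℕ} (hrank : (diffMat (fun i => resid A b (x i)) k).rank = k) (y : Fin d → ℝ) :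
    y - x 0 ∈ krylov (P * A) (P *ᵥ resid A b (x 0)) k ↔ ∃ G, y = x k - diffMat x k *ᵥ G := by
  have hxk : x k - x 0 ∈ krylov (P * A) (P *ᵥ resid A b (x 0)) k :=
    sub_mem_of_forall_succ_sub_mem fun l hl =>
      krylov_mono _ _ hl (anderson_sub_mem_krylov hx1 hrec l)
  rw [show y - x 0 = (x k - x 0) - (x k - y) by abel, Submodule.sub_mem_iff_right _ hxk,
    ← range_diffMat_eq_krylov hA hx1 hrec hrank, LinearMap.mem_range]
  exact exists_congr fun G => by
    rw [mulVecLin_apply, eq_sub_iff_add_eq, eq_sub_iff_add_eq, add_comm]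

end Anderson

section Uniqueness

variable {d : ℕ} {A : Matrix (Fin d) (Fin d) ℝ} {b : Fin d → ℝ}

theorem eq_of_forall_norm2_resid_le (hA : IsUnit A.det) {K : Submodule ℝ (Fin d → ℝ)}
    {x₀ y z : Fin d → ℝ} (hy : y - x₀ ∈ K) (hz : z - x₀ ∈ K)
    (hy_min : ∀ w, w - x₀ ∈ K → norm2 (resid A b y) ≤ norm2 (resid A b w))
    (hz_min : ∀ w, w - x₀ ∈ K → norm2 (resid A b z) ≤ norm2 (resid A b w)) : y = z := by
  have hmid : (1 / 2 : ℝ) • (y + z) - x₀ ∈ K := by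
    rw [show (1 / 2 : ℝ) • (y + z) - x₀ = (1 / 2 : ℝ) • ((y - x₀) + (z - x₀)) by module]
    exact K.smul_mem _ (add_mem hy hz)
  have hres : resid A b y = resid A b z := by
    by_contra hne
    have hnorm := le_antisymm (hy_min z hz) (hz_min y hy)
    rw [norm2_eq_norm_toLp, norm2_eq_norm_toLp] at hnorm
    have hlt := (norm_midpoint_lt_iff hnorm).2 (by simpa using hne)
    have hle := hy_min _ hmid
    rw [norm2_eq_norm_toLp, norm2_eq_norm_toLp, resid_midpoint, WithLp.toLp_smul,
      WithLp.toLp_add] at hle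
    exact hlt.not_ge hle
  have hAyz : A *ᵥ y = A *ᵥ z := sub_right_injective hres
  exact mulVec_injective_iff_isUnit.mpr ((isUnit_iff_isUnit_det A).mpr hA) hAyz

end Uniqueness

theorem preconditioned_anderson_mixing_eq_gmres_general (d : ℕ)
    (A : Matrix (Fin d) (Fin d) ℝ) (hA : A.PosDef)
    (M : Matrix (Fin d) (Fin d) ℝ)
    (b x0 : Fin d → ℝ)
    (x : ℕ → Fin d → ℝ) (Γ : (j : ℕ) → Fin j → ℝ)
    (hx0 : x 0 = x0)
    (hx1 : x 1 = x 0 + M⁻¹.mulVec (resid A b (x 0)))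
    (hΓ : ∀ j : ℕ, ∀ G : Fin j → ℝ,
      norm2 (resid A b (x j) - (diffMat (fun i => resid A b (x i)) j).mulVec (Γ j)) ≤
        norm2 (resid A b (x j) - (diffMat (fun i => resid A b (x i)) j).mulVec G))
    (hrec : ∀ j : ℕ, 1 ≤ j →
      x (j + 1) = x j + M⁻¹.mulVec (resid A b (x j))
        - (diffMat x j + M⁻¹ * diffMat (fun i => resid A b (x i)) j).mulVec (Γ j))
    (k : ℕ)
    (hrank : (diffMat (fun i => resid A b (x i)) k).rank = k) :
    (x k - (diffMat x k).mulVec (Γ k)) - x0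
        ∈ krylov (M⁻¹ * A) (M⁻¹.mulVec (resid A b x0)) k ∧
    (∀ y : Fin d → ℝ, y - x0 ∈ krylov (M⁻¹ * A) (M⁻¹.mulVec (resid A b x0)) k →
      norm2 (resid A b (x k - (diffMat x k).mulVec (Γ k))) ≤ norm2 (resid A b y)) ∧
    (∀ y : Fin d → ℝ, y - x0 ∈ krylov (M⁻¹ * A) (M⁻¹.mulVec (resid A b x0)) k →
      (∀ z : Fin d → ℝ, z - x0 ∈ krylov (M⁻¹ * A) (M⁻¹.mulVec (resid A b x0)) k →
        norm2 (resid A b y) ≤ norm2 (resid A b z)) →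
      y = x k - (diffMat x k).mulVec (Γ k)) := by
  subst hx0
  have hA' : IsUnit A.det := isUnit_iff_ne_zero.mpr hA.det_pos.ne'
  have hmem := sub_mem_krylov_iff hA' hx1 hrec hrank
  have hproj_mem := (hmem _).2 ⟨Γ k, rfl⟩
  have hproj_min : ∀ y, y - x 0 ∈ krylov (M⁻¹ * A) (M⁻¹ *ᵥ resid A b (x 0)) k →
      norm2 (resid A b (x k - diffMat x k *ᵥ Γ k)) ≤ norm2 (resid A b y) := by
    intro y hy
    obtain ⟨G, rfl⟩ := (hmem y).1 hy
    rw [resid_sub_diffMat_mulVec, resid_sub_diffMat_mulVec]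
    exact hΓ k G
  exact ⟨hproj_mem, hproj_min, fun y hy hy_min =>
    eq_of_forall_norm2_resid_le hA' hy hproj_mem hy_min hproj_min⟩

/-- **Proposition 3** (preconditioned Anderson mixing is right-preconditioned GMRES on
strongly convex quadratics): if `rank R_k = k`, the projected iterate
`x̄_k = x_k − X_kΓ_k` is the unique minimizer of `x ↦ ‖b − Ax‖₂` over the affine subspace
`x₀ + 𝒦_k(M⁻¹A, M⁻¹r(x₀))`, i.e. `x̄_k = x_k^{RG}`. -/
theorem preconditioned_anderson_mixing_eq_gmres (d : ℕ) (hd : 1 ≤ d)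
    (A : Matrix (Fin d) (Fin d) ℝ) (hA : A.PosDef)
    (M : Matrix (Fin d) (Fin d) ℝ) (hM : IsUnit M.det)
    (b x0 : Fin d → ℝ)
    (x : ℕ → Fin d → ℝ) (Γ : (j : ℕ) → Fin j → ℝ)
    (hx0 : x 0 = x0)
    (hx1 : x 1 = x 0 + M⁻¹.mulVec (resid A b (x 0)))
    (hΓ : ∀ j : ℕ, ∀ G : Fin j → ℝ,
      norm2 (resid A b (x j) - (diffMat (fun i => resid A b (x i)) j).mulVec (Γ j)) ≤
        norm2 (resid A b (x j) - (diffMat (fun i => resid A b (x i)) j).mulVec G))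
    (hrec : ∀ j : ℕ, 1 ≤ j →
      x (j + 1) = x j + M⁻¹.mulVec (resid A b (x j))
        - (diffMat x j + M⁻¹ * diffMat (fun i => resid A b (x i)) j).mulVec (Γ j))
    (k : ℕ) (hk : 1 ≤ k)
    (hrank : (diffMat (fun i => resid A b (x i)) k).rank = k) :
    (x k - (diffMat x k).mulVec (Γ k)) - x0
        ∈ krylov (M⁻¹ * A) (M⁻¹.mulVec (resid A b x0)) k ∧
    (∀ y : Fin d → ℝ, y - x0 ∈ krylov (M⁻¹ * A) (M⁻¹.mulVec (resid A b x0)) k →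
      norm2 (resid A b (x k - (diffMat x k).mulVec (Γ k))) ≤ norm2 (resid A b y)) ∧
    (∀ y : Fin d → ℝ, y - x0 ∈ krylov (M⁻¹ * A) (M⁻¹.mulVec (resid A b x0)) k →
      (∀ z : Fin d → ℝ, z - x0 ∈ krylov (M⁻¹ * A) (M⁻¹.mulVec (resid A b x0)) k →
        norm2 (resid A b y) ≤ norm2 (resid A b z)) →
      y = x k - (diffMat x k).mulVec (Γ k)) :=
  preconditioned_anderson_mixing_eq_gmres_general d A hA M b x0 x Γ hx0 hx1 hΓ hrec k hrank
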